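/- arXiv:1106.4316 — 3 statements merged into one kernel-verified Lean document; each statement's English description precedes it below -/
import Mathlib

section
/- In the monomial braid group B(r,n), the elements X_1, …, X_n pairwise commute, and ζ_n = (ρ_0 ρ_1 ⋯ ρ_{n-1})^n = X_1 X_2 ⋯ X_n. -/
/-!
The monomial braid group `B(r,n)` (independent of `r`) is presented with generators
`ρ_0, …, ρ_{n-1}` and relations `(ρ_0ρ_1)^2 = (ρ_1ρ_0)^2`,
`ρ_iρ_{i+1}ρ_i = ρ_{i+1}ρ_iρ_{i+1}` (`1 ≤ i ≤ n-2`), `ρ_iρ_j = ρ_jρ_i` (`|i-j| > 1`).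
We realize it as a presented group on generators indexed by `ℕ`, where the superfluous
generators `ρ_k` for `k ≥ n` are killed by extra relators.
-/

namespace MonomialBraid

/-- Generator `ρ_k` of the free group. -/
def g (k : ℕ) : FreeGroup ℕ := FreeGroup.of k

/-- Relators of the monomial braid group `B(r,n)` (independent of `r`),
together with relators killing the junk generators `ρ_k`, `k ≥ n`. -/
def brels (n : ℕ) : Set (FreeGroup ℕ) :=
  {w | ∃ k, n ≤ k ∧ w = g k} ∪
  {w | 2 ≤ n ∧ w = (g 0 * g 1) ^ 2 * ((g 1 * g 0) ^ 2)⁻¹} ∪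
  {w | ∃ i, 1 ≤ i ∧ i + 1 ≤ n - 1 ∧
      w = g i * g (i + 1) * g i * (g (i + 1) * g i * g (i + 1))⁻¹} ∪
  {w | ∃ i j, i + 2 ≤ j ∧ j ≤ n - 1 ∧ w = g i * g j * (g j * g i)⁻¹}

/-- The monomial braid group `B(r,n)` (independent of `r`). -/
abbrev B (n : ℕ) := PresentedGroup (brels n)

/-- The generator `ρ_k` of `B(r,n)`. -/
def rh (n k : ℕ) : B n := PresentedGroup.of k

/-- `ζ_n = (ρ_0 ρ_1 ⋯ ρ_{n-1})^n`. -/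
def zeta (n : ℕ) : B n := (((List.range n).map (rh n)).prod) ^ n

/-- `X_i = ρ_{i-1} ⋯ ρ_2 ρ_1 ρ_0 ρ_1 ρ_2 ⋯ ρ_{i-1}` for `1 ≤ i ≤ n`. -/
def XX (n i : ℕ) : B n :=
  (((List.range (i - 1)).reverse.map fun k => rh n (k + 1)).prod) * rh n 0 *
    (((List.range (i - 1)).map fun k => rh n (k + 1)).prod)

variable {n : ℕ}

lemma mk_rel {x : FreeGroup ℕ} (h : x ∈ brels n) : PresentedGroup.mk (brels n) x = 1 := by
  have : x ∈ Subgroup.normalClosure (brels n) := Subgroup.subset_normalClosure h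
  exact (QuotientGroup.eq_one_iff x).mpr this

lemma rh_eq (k : ℕ) : rh n k = PresentedGroup.mk (brels n) (g k) := rfl

lemma r_one {k : ℕ} (h : n ≤ k) : rh n k = 1 := by
  have := mk_rel (n := n) (Or.inl (Or.inl (Or.inl ⟨k, h, rfl⟩)))
  rw [rh_eq]; exact this

lemma rel0 : (rh n 0 * rh n 1) ^ 2 = (rh n 1 * rh n 0) ^ 2 := by
  rcases le_or_gt 2 n with h | h
  · have := mk_rel (n := n) (Or.inl (Or.inl (Or.inr ⟨h, rfl⟩)))
    simp only [map_mul, map_inv, mul_inv_eq_one] at this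
    simpa [rh_eq, map_pow, map_mul] using this
  · have h1 : rh n 1 = 1 := r_one (by omega)
    rw [h1, mul_one, one_mul]

lemma braid {i : ℕ} (h1 : 1 ≤ i) (h2 : i + 1 ≤ n - 1) :
    rh n i * rh n (i+1) * rh n i = rh n (i+1) * rh n i * rh n (i+1) := by
  have := mk_rel (n := n) (Or.inl (Or.inr ⟨i, h1, h2, rfl⟩))
  simp only [map_mul, map_inv, mul_inv_eq_one] at this
  simpa [rh_eq, map_mul] using this

lemma comm {i j : ℕ} (h : i + 2 ≤ j) : rh n i * rh n j = rh n j * rh n i := by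
  rcases le_or_gt n j with hj | hj
  · rw [r_one hj, mul_one, one_mul]
  · have := mk_rel (n := n) (Or.inr ⟨i, j, h, by omega, rfl⟩)
    simp only [map_mul, map_inv, mul_inv_eq_one] at this
    simpa [rh_eq, map_mul] using this

/-! ### x-forms and converters -/

lemma xf2 {a b c d : B n} (h : a * b = c * d) (x : B n) :
    a * (b * x) = c * (d * x) := by
  simp only [← mul_assoc]; rw [h]

lemma xf3 {a b c d e f : B n} (h : a * b * c = d * e * f) (x : B n) :
    a * (b * (c * x)) = d * (e * (f * x)) := by
  simp only [← mul_assoc]; rw [h]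

lemma comm_x {i j : ℕ} (h : i + 2 ≤ j) (x : B n) :
    rh n i * (rh n j * x) = rh n j * (rh n i * x) := xf2 (comm h) x

lemma braid_x {i : ℕ} (h1 : 1 ≤ i) (h2 : i + 1 ≤ n - 1) (x : B n) :
    rh n i * (rh n (i+1) * (rh n i * x)) = rh n (i+1) * (rh n i * (rh n (i+1) * x)) :=
  xf3 (braid h1 h2) x

/-! ### ascending blocks -/

def asc (n a m : ℕ) : B n := ((List.range' a m).map (rh n)).prod

@[simp] lemma asc_zero (a : ℕ) : asc n a 0 = 1 := rfl

lemma asc_succ (a m : ℕ) : asc n a (m+1) = asc n a m * rh n (a+m) := by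
  unfold asc
  rw [List.range'_concat]
  simp [mul_comm]

lemma asc_append (a m l : ℕ) : asc n a (m + l) = asc n a m * asc n (a + m) l := by
  unfold asc
  rw [← List.range'_append_1, List.map_append, List.prod_append]

lemma asc_one (a : ℕ) : asc n a 1 = rh n a := by
  simp [asc, List.range'_one]

lemma asc_cons (a m : ℕ) : asc n a (m+1) = rh n a * asc n (a+1) m := by
  unfold asc
  rw [List.range'_succ]
  simp


lemma r_comm_asc {j a : ℕ} (m : ℕ) (h : j + 2 ≤ a) :
    rh n j * asc n a m = asc n a m * rh n j := by
  induction m with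
  | zero => simp
  | succ m ih =>
      rw [asc_succ, ← mul_assoc, ih, mul_assoc, comm (show j + 2 ≤ a + m by omega),
        ← mul_assoc]

lemma asc_comm_r {j a : ℕ} : ∀ m, a + m + 1 ≤ j →
    asc n a m * rh n j = rh n j * asc n a m
  | 0, _ => by simp
  | (m+1), h => by
      rw [asc_succ, mul_assoc, comm (show a + m + 2 ≤ j by omega), ← mul_assoc,
        asc_comm_r m (by omega), mul_assoc]

lemma asc_comm_asc {a b l : ℕ} : ∀ m, a + m + 1 ≤ b →
    asc n a m * asc n b l = asc n b l * asc n a m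
  | 0, _ => by simp
  | (m+1), h => by
      rw [asc_succ, mul_assoc, r_comm_asc l (show a + m + 2 ≤ b by omega), ← mul_assoc,
        asc_comm_asc m (by omega), mul_assoc]

/-! ### descending prefix, blocks product, and the `X` elements -/

def dsc (n k : ℕ) : B n := ((List.range k).reverse.map (fun j => rh n (j+1))).prod

@[simp] lemma dsc_zero : dsc n 0 = 1 := rfl

lemma dsc_succ (k : ℕ) : dsc n (k+1) = rh n (k+1) * dsc n k := by
  unfold dsc
  rw [List.range_succ]
  simp

lemma r_comm_dsc {j : ℕ} : ∀ k, k + 2 ≤ j → rh n j * dsc n k = dsc n k * rh n j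
  | 0, _ => by simp
  | (k+1), h => by
      rw [dsc_succ, ← mul_assoc, ← comm (show k + 1 + 2 ≤ j by omega), mul_assoc,
        r_comm_dsc k (by omega), ← mul_assoc]

lemma asc_comm_dsc {a k : ℕ} (m : ℕ) (h : k + 2 ≤ a) :
    asc n a m * dsc n k = dsc n k * asc n a m := by
  induction m with
  | zero => simp
  | succ m ih =>
      rw [asc_succ, mul_assoc, r_comm_dsc k (show k + 2 ≤ a + m by omega), ← mul_assoc,
        ih, mul_assoc]

def Vb (n c m l : ℕ) : B n := ((List.range l).map (fun j => asc n (c - j) m)).prod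

@[simp] lemma Vb_zero (c m : ℕ) : Vb n c m 0 = 1 := rfl

lemma Vb_cons (c m l : ℕ) : Vb n c m (l+1) = asc n c m * Vb n (c-1) m l := by
  unfold Vb
  rw [List.range_succ_eq_map]
  simp only [List.map_cons, List.prod_cons, Nat.sub_zero, List.map_map]
  have : List.map ((fun j => asc n (c - j) m) ∘ Nat.succ) (List.range l)
      = List.map (fun j => asc n (c - 1 - j) m) (List.range l) := by
    apply List.map_congr_left
    intro j _
    simp only [Function.comp_apply]
    congr 1
    omega
  rw [this]

lemma Vb_snoc (c m l : ℕ) : Vb n c m (l+1) = Vb n c m l * asc n (c - l) m := by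
  unfold Vb
  rw [List.range_succ]
  simp

lemma Vb_one_block (c m : ℕ) : Vb n c m 1 = asc n c m := by
  rw [Vb_cons, Vb_zero, mul_one]

lemma r_comm_vb {j : ℕ} (m : ℕ) : ∀ l c, j + l + 1 ≤ c →
    rh n j * Vb n c m l = Vb n c m l * rh n j
  | 0, c, _ => by simp
  | (l+1), c, h => by
      rw [Vb_cons, ← mul_assoc, r_comm_asc m (show j + 2 ≤ c by omega), mul_assoc,
        r_comm_vb m l (c-1) (by omega), ← mul_assoc]

lemma vb_comm_r {j c : ℕ} (m : ℕ) (hc : c + m + 1 ≤ j) : ∀ l,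
    Vb n c m l * rh n j = rh n j * Vb n c m l
  | 0 => by simp
  | (l+1) => by
      rw [Vb_snoc, mul_assoc, asc_comm_r m (show c - l + m + 1 ≤ j by omega), ← mul_assoc,
        vb_comm_r m hc l, mul_assoc]

def P (n m : ℕ) : B n := dsc n m * rh n 0 * asc n 1 m

lemma P_zero : P n 0 = rh n 0 := by simp [P]

lemma P_succ (m : ℕ) : P n (m+1) = rh n (m+1) * P n m * rh n (m+1) := by
  have h1 : (1 : ℕ) + m = m + 1 := by omega
  rw [P, P, dsc_succ, asc_succ, h1]
  simp only [mul_assoc]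

lemma r_comm_P {j m : ℕ} (h : m + 2 ≤ j) : rh n j * P n m = P n m * rh n j := by
  have h1 := r_comm_dsc (n := n) (j := j) m (by omega)
  have h2 := comm (n := n) (show 0 + 2 ≤ j by omega)
  have h3 := asc_comm_r (n := n) (a := 1) (j := j) m (by omega)
  rw [P]
  simp only [mul_assoc]
  rw [xf2 h1, xf2 h2.symm, ← h3]


lemma xf4 {a b c d e f g' h' : B n} (h : a * b * c * d = e * f * g' * h') (x : B n) :
    a * (b * (c * (d * x))) = e * (f * (g' * (h' * x))) := by
  simp only [← mul_assoc]; rw [h]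

lemma Q : ∀ m, m + 2 ≤ n → ∀ x : B n,
    P n m * (rh n (m+1) * (P n m * (rh n (m+1) * x)))
      = rh n (m+1) * (P n m * (rh n (m+1) * (P n m * x)))
  | 0, h, x => by
    have h0 := rel0 (n := n)
    rw [sq, sq] at h0
    have h0' : rh n 0 * rh n 1 * rh n 0 * rh n 1 = rh n 1 * rh n 0 * rh n 1 * rh n 0 := by
      simp only [mul_assoc] at h0 ⊢
      exact h0
    rw [P_zero]
    exact xf4 h0' x
  | (m+1), h, x => by
    have hb := braid_x (n := n) (i := m+1) (by omega) (by omega)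
    have hc := r_comm_P (n := n) (j := m+1+1) (m := m) (by omega)
    have hcx := xf2 hc
    have hcx' := xf2 hc.symm
    have ih := Q m (by omega)
    rw [P_succ]
    simp only [mul_assoc]
    conv_lhs => rw [hb, hcx, hcx', ← hb, ih, hb, hcx', hcx, ← hb]


lemma P_comm_succ {a : ℕ} (h : a + 2 ≤ n) : ∀ d, a + d + 2 ≤ n →
    P n a * P n (a + 1 + d) = P n (a + 1 + d) * P n a
  | 0, _ => by
    have q := Q (n := n) a (by omega) 1
    simp only [mul_one] at q
    rw [Nat.add_zero, P_succ]
    simp only [mul_assoc]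
    exact q
  | (d+1), hd => by
    have hc := r_comm_P (n := n) (j := a + 1 + d + 1) (m := a) (by omega)
    have ih := P_comm_succ h d (by omega)
    have : a + 1 + (d + 1) = a + 1 + d + 1 := by omega
    rw [this, P_succ]
    simp only [mul_assoc]
    rw [← xf2 hc, xf2 ih, hc.symm]

lemma P_comm {a b : ℕ} (hab : a < b) (hb : b + 1 ≤ n) :
    P n a * P n b = P n b * P n a := by
  obtain ⟨d, rfl⟩ : ∃ d, b = a + 1 + d := ⟨b - a - 1, by omega⟩
  exact P_comm_succ (by omega) d (by omega)

lemma asc_one_eq (m : ℕ) :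
    asc n 1 m = ((List.range m).map fun k => rh n (k + 1)).prod := by
  unfold asc
  rw [List.range'_eq_map_range, List.map_map]
  congr 1
  apply List.map_congr_left
  intro j _
  simp only [Function.comp_apply]
  congr 1
  omega

lemma XX_eq (i : ℕ) : XX n i = P n (i - 1) := by
  rw [XX, P, asc_one_eq]
  rfl

lemma XX_comm {i j : ℕ} (h1i : 1 ≤ i) (h2i : i ≤ n) (h1j : 1 ≤ j) (h2j : j ≤ n) :
    XX n i * XX n j = XX n j * XX n i := by
  rcases lt_trichotomy i j with h | h | h
  · rw [XX_eq, XX_eq]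
    exact P_comm (by omega) (by omega)
  · rw [h]
  · rw [XX_eq, XX_eq]
    exact (P_comm (a := j - 1) (b := i - 1) (by omega) (by omega)).symm


lemma star {a : ℕ} (ha : 1 ≤ a) : ∀ m, a + m + 1 ≤ n →
    asc n (a+1) m * rh n a * asc n (a+1) m = rh n a * asc n (a+1) m * asc n a m
  | 0, _ => by simp
  | 1, h => by
    rw [asc_one, asc_one]
    exact (braid ha (by omega)).symm
  | (m+2), h => by
    have ih := star ha (m+1) (by omega)
    have e1 : a+1+(m+1) = a+m+2 := by omega
    have e2 : a+(m+1) = a+m+1 := by omega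
    have e3 : a+1+m = a+m+1 := by omega
    have hx := comm_x (n := n) (i := a) (j := a+m+2) (by omega)
    have hEmu : asc n (a+1) m * rh n (a+m+2) = rh n (a+m+2) * asc n (a+1) m :=
      asc_comm_r m (by omega)
    have hFu : asc n a (m+1) * rh n (a+m+2) = rh n (a+m+2) * asc n a (m+1) :=
      asc_comm_r (m+1) (by omega)
    have br : rh n (a+m+2) * (rh n (a+m+1) * rh n (a+m+2))
        = rh n (a+m+1) * (rh n (a+m+2) * rh n (a+m+1)) := by
      have hb := (braid (n := n) (i := a+m+1) (by omega) (by omega)).symm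
      rw [(show a+m+1+1 = a+m+2 by omega)] at hb
      simp only [mul_assoc] at hb
      exact hb
    have sub : rh n (a+m+2) * (asc n (a+1) (m+1) * rh n (a+m+2))
        = asc n (a+1) (m+1) * (rh n (a+m+2) * rh n (a+m+1)) := by
      rw [asc_succ (a+1) m, e3]
      simp only [mul_assoc]
      rw [← xf2 hEmu, br]
    rw [asc_succ (a+1) (m+1), asc_succ a (m+1), e1, e2]
    simp only [mul_assoc]
    conv_lhs => rw [← hx, sub, xf3 ih, xf2 hFu]


lemma Vb_cons' (c m l : ℕ) : Vb n (c+1) m (l+1) = asc n (c+1) m * Vb n c m l := by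
  rw [Vb_cons, (show c+1-1 = c by omega)]

lemma Vb_mzero : ∀ l c, Vb n c 0 l = 1
  | 0, _ => rfl
  | (l+1), c => by rw [Vb_cons, asc_zero, one_mul, Vb_mzero l]

lemma hstar {k m : ℕ} (h : k + m + 2 ≤ n) :
    asc n (k+2) m * (Vb n (k+1) m (k+1) * rh n (k+m+1))
      = rh n (k+1) * Vb n (k+2) m (k+2) := by
  have hvb := vb_comm_r (n := n) (j := k+m+1) (c := k) m (by omega) k
  have hasc : asc n (k+1) m * rh n (k+m+1) = asc n (k+1) (m+1) := by
    rw [asc_succ, (show k+1+m = k+m+1 by omega)]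
  have hascx : ∀ x : B n, asc n (k+1) m * (rh n (k+m+1) * x) = asc n (k+1) (m+1) * x :=
    fun x => by rw [← mul_assoc, hasc]
  have hst := star (n := n) (a := k+1) (by omega) m (by omega)
  rw [(show k+1+1 = k+2 by omega)] at hst
  have hcons : asc n (k+1) (m+1) = rh n (k+1) * asc n (k+2) m := by
    rw [asc_cons, (show k+1+1 = k+2 by omega)]
  rw [Vb_cons' k m k, Vb_cons' (k+1) m (k+1), Vb_cons' k m k]
  simp only [mul_assoc]
  conv_lhs => rw [hvb, hascx, hcons]
  simp only [mul_assoc]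
  conv_lhs => rw [xf3 hst]

lemma fstar : ∀ k m, k + m + 1 ≤ n →
    Vb n (k+1) m k * asc n 1 (k+m) = asc n 1 k * Vb n (k+1) m (k+1)
  | 0, m, _ => by simp [Vb_one_block]
  | (k+1), m, h => by
    have ih := fstar k m (by omega)
    have ihx := xf2 ih
    have hA := asc_comm_asc (n := n) (a := 1) (b := k+2) (l := m) k (by omega)
    rw [Vb_cons' (k+1) m k, (show k+1+1 = k+2 by omega), (show k+1+m = k+m+1 by omega),
      asc_succ 1 (k+m), (show 1+(k+m) = k+m+1 by omega), asc_succ 1 k,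
      (show 1+k = k+1 by omega)]
    simp only [mul_assoc]
    conv_lhs => rw [ihx, ← xf2 hA, hstar (by omega)]


lemma ext : ∀ k m, Vb n k (m+1) k = dsc n k * Vb n (k+1) m k
  | 0, m => by simp
  | (k+1), m => by
    have ih := ext k m
    have hcd := asc_comm_dsc (n := n) (a := k+1+1) (k := k) m (by omega)
    rw [Vb_cons' k (m+1) k, ih, asc_cons, dsc_succ, Vb_cons' (k+1) m k]
    simp only [mul_assoc]
    conv_lhs => rw [xf2 hcd]

lemma bigstar {k : ℕ} (h : k + 1 ≤ n) :
    Vb n k (n-k) k * asc n 0 n = P n k * Vb n (k+1) (n-(k+1)) (k+1) := by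
  set m := n - (k+1) with hm
  have em : n - k = m + 1 := by omega
  have e0 : asc n 0 n = rh n 0 * asc n 1 (k+m) := by
    have e : asc n 0 n = asc n 0 (k+m+1) := by congr 1; omega
    rw [e, asc_cons 0 (k+m), (show (0:ℕ)+1 = 1 by omega)]
  have hr0 := r_comm_vb (n := n) (j := 0) m k (k+1) (by omega)
  have hext := ext (n := n) k m
  have hf := fstar (n := n) k m (by omega)
  rw [em, hext, e0, P]
  simp only [mul_assoc]
  conv_lhs => rw [← xf2 hr0, hf]

lemma Zlem : ∀ k, k ≤ n →
    (asc n 0 n)^k = ((List.range k).map (fun i => P n i)).prod * Vb n k (n-k) k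
  | 0, _ => by simp
  | (k+1), h => by
    rw [pow_succ, Zlem k (by omega), List.range_succ, mul_assoc, bigstar (by omega)]
    simp only [List.map_append, List.prod_append, List.map_cons, List.prod_cons,
      List.map_nil, List.prod_nil, mul_one, mul_assoc]

/-- In `B(r,n)`, the elements `X_1, …, X_n` pairwise commute, and
`ζ_n = (ρ_0 ρ_1 ⋯ ρ_{n-1})^n = X_1 X_2 ⋯ X_n`. -/
theorem X_commute_and_zeta_eq_prod_X (n : ℕ) :
    (∀ i j, 1 ≤ i → i ≤ n → 1 ≤ j → j ≤ n → XX n i * XX n j = XX n j * XX n i) ∧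
    zeta n = ((List.range n).map fun k => XX n (k + 1)).prod := by
  constructor
  · intro i j h1 h2 h3 h4
    exact XX_comm h1 h2 h3 h4
  · have hD : ((List.range n).map (rh n)).prod = asc n 0 n := by
      unfold asc
      rw [List.range_eq_range']
    have hxp : ∀ k, XX n (k+1) = P n k := fun k => by rw [XX_eq, Nat.add_sub_cancel]
    rw [zeta, hD, Zlem n le_rfl, Nat.sub_self, Vb_mzero, mul_one]
    simp only [hxp]

end MonomialBraid
end

section
/- The three strand pure braid group P_3 is isomorphic to ℤ × F_2, where F_2 is the free group of rank 2, and Aut(P_3) ≅ ℤ^2 ⋊ (ℤ/2ℤ × Aut(F_2)) for a suitable action of ℤ/2ℤ × Aut(F_2) on ℤ^2. -/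
/-!
The Artin pure braid group `P_n` is presented with generators `A(i,j)`, `1 ≤ i < j ≤ n`,
and the standard pure braid relations.  We realize it as a presented group on generators
indexed by `ℕ × ℕ`, where the superfluous generators `A(i,j)` with `¬(1 ≤ i < j ≤ n)`
are killed by extra relators.
-/

namespace PureBraid

/-- The generator `A(i,j)` of the free group. -/
def a (i j : ℕ) : FreeGroup (ℕ × ℕ) := FreeGroup.of (i, j)

/-- The relators of the pure braid group `P_n` (together with relators killing the junk
generators `A(i,j)` for `¬(1 ≤ i < j ≤ n)`). -/
def rels (n : ℕ) : Set (FreeGroup (ℕ × ℕ)) :=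
  {w | ∃ i j, ¬(1 ≤ i ∧ i < j ∧ j ≤ n) ∧ w = a i j} ∪
  -- i < r < s < j
  {w | ∃ i j r s, 1 ≤ i ∧ i < r ∧ r < s ∧ s < j ∧ j ≤ n ∧
      w = (a r s)⁻¹ * a i j * a r s * (a i j)⁻¹} ∪
  -- r < s < i < j
  {w | ∃ i j r s, 1 ≤ r ∧ r < s ∧ s < i ∧ i < j ∧ j ≤ n ∧
      w = (a r s)⁻¹ * a i j * a r s * (a i j)⁻¹} ∪
  -- r < s = i < j
  {w | ∃ i j r, 1 ≤ r ∧ r < i ∧ i < j ∧ j ≤ n ∧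
      w = (a r i)⁻¹ * a i j * a r i * (a r j * a i j * (a r j)⁻¹)⁻¹} ∪
  -- r = i < s < j
  {w | ∃ i j s, 1 ≤ i ∧ i < s ∧ s < j ∧ j ≤ n ∧
      w = (a i s)⁻¹ * a i j * a i s *
        (a i j * a s j * a i j * (a s j)⁻¹ * (a i j)⁻¹)⁻¹} ∪
  -- r < i < s < j
  {w | ∃ i j r s, 1 ≤ r ∧ r < i ∧ i < s ∧ s < j ∧ j ≤ n ∧
      w = (a r s)⁻¹ * a i j * a r s *
        ((a r j * a s j * (a r j)⁻¹ * (a s j)⁻¹) * a i j *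
          (a r j * a s j * (a r j)⁻¹ * (a s j)⁻¹)⁻¹)⁻¹}

/-- The pure braid group `P_n`. -/
abbrev P (n : ℕ) := PresentedGroup (rels n)

/-- The generator `A(i,j)` of `P_n`. -/
def A (n i j : ℕ) : P n := PresentedGroup.of (i, j)

/-- The generator of the center:
`Z_n = (A(1,2))(A(1,3)A(2,3)) ⋯ (A(1,n) ⋯ A(n-1,n))`. -/
def Z (n : ℕ) : P n :=
  ((List.range (n - 1)).map fun k =>
    (((List.range (k + 1)).map fun i => A n (i + 1) (k + 2)).prod)).prod


end PureBraid

set_option linter.unusedSectionVars false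

namespace PureBraid
open FreeGroup

variable {α : Type*} [DecidableEq α]

lemma toWord_mul' (u v : FreeGroup α) :
    (u * v).toWord = reduce (u.toWord ++ v.toWord) := by
  conv_lhs => rw [← mk_toWord (x := u), ← mk_toWord (x := v), mul_mk, toWord_mk]

lemma cons_toWord (s : α × Bool) (u : FreeGroup α) :
    (mk [s] * u).toWord =
      if u.toWord.head? = some (s.1, !s.2) then u.toWord.tail else s :: u.toWord := by
  have h1 : (mk [s]).toWord = [s] := by rw [toWord_mk, reduce_singleton]
  rw [toWord_mul', h1]
  have h2 : ([s] ++ u.toWord : List (α × Bool)) = s :: u.toWord := rfl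
  rw [h2, reduce.cons, reduce_toWord]
  obtain ⟨a, b⟩ := s
  cases hu : u.toWord with
  | nil => simp
  | cons hd tl =>
    obtain ⟨c, d⟩ := hd
    simp only [List.head?_cons, Option.some_inj, List.tail_cons]
    by_cases hac : a = c
    · subst hac
      cases b <;> cases d <;> simp
    · simp [hac, Ne.symm hac, Prod.ext_iff]

lemma invRev_cons (s : α × Bool) (L : List (α × Bool)) :
    invRev (s :: L) = invRev L ++ [(s.1, !s.2)] := by
  simp [invRev]

lemma invRev_tail (L : List (α × Bool)) : invRev L.tail = (invRev L).dropLast := by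
  cases L with
  | nil => simp [invRev]
  | cons hd tl => simp [invRev_cons, List.dropLast_append_of_ne_nil, List.dropLast_concat]

lemma head?_invRev (L : List (α × Bool)) :
    (invRev L).head? = L.getLast?.map (fun p => (p.1, !p.2)) := by
  unfold invRev
  rw [List.head?_reverse, List.getLast?_map]

lemma snoc_toWord (s : α × Bool) (u : FreeGroup α) :
    (u * mk [s]).toWord =
      if u.toWord.getLast? = some (s.1, !s.2) then u.toWord.dropLast
      else u.toWord ++ [s] := by
  have key : u * mk [s] = (mk [(s.1, !s.2)] * u⁻¹)⁻¹ := by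
    have h3 : (mk [(s.1, !s.2)] : FreeGroup α)⁻¹ = mk [s] := by
      rw [inv_mk]; simp [invRev]
    rw [mul_inv_rev, inv_inv, h3]
  rw [key, toWord_inv, cons_toWord, toWord_inv, head?_invRev]
  have hcond : (u.toWord.getLast?.map (fun p => (p.1, !p.2)) =
      some ((s.1, !s.2).1, !(s.1, !s.2).2)) ↔ u.toWord.getLast? = some (s.1, !s.2) := by
    cases hl : u.toWord.getLast? with
    | none => simp
    | some p =>
      obtain ⟨p1, p2⟩ := p
      obtain ⟨a, b⟩ := s
      simp only [Option.map_some, Option.some_inj, Prod.mk.injEq]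
      cases b <;> cases p2 <;> simp
  by_cases h : u.toWord.getLast? = some (s.1, !s.2)
  · rw [if_pos (hcond.mpr h), if_pos h, invRev_tail, invRev_invRev]
  · rw [if_neg (fun hc => h (hcond.mp hc)), if_neg h, invRev_cons, invRev_invRev]
    simp

lemma replicate_of_append_singleton_eq_cons :
    ∀ (L : List (α × Bool)) (c), L ++ [c] = c :: L → L = List.replicate L.length c := by
  intro L
  induction L with
  | nil => intro c _; rfl
  | cons a M ih =>
    intro c h
    simp only [List.cons_append, List.cons.injEq] at h
    obtain ⟨rfl, h2⟩ := h
    have := ih a h2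
    simp [List.replicate_succ, ← this]

lemma replicate_of_dropLast_eq_tail :
    ∀ (L : List (α × Bool)) (c), L.head? = some c → L.dropLast = L.tail →
      L = List.replicate L.length c := by
  intro L
  induction L with
  | nil => intro c h; simp at h
  | cons a M ih =>
    intro c hh ht
    simp only [List.head?_cons, Option.some_inj] at hh
    subst hh
    cases M with
    | nil => rfl
    | cons b T =>
      rw [List.dropLast_cons₂, List.tail_cons] at ht
      have hb : a = b := by
        have := congrArg List.head? ht
        cases T <;> simp_all
      subst hb
      have h4 : (a :: T).dropLast = (a :: T).tail := by
        have h' : (a :: T).dropLast = T := by simpa using congrArg List.tail ht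
        rw [h', List.tail_cons]
      have hrep := ih a rfl h4
      calc a :: a :: T = a :: List.replicate (a :: T).length a := by rw [← hrep]
        _ = List.replicate (a :: a :: T).length a := by simp [List.replicate_succ]

end PureBraid

namespace PureBraid
open FreeGroup

lemma freeGroup_eq_one_of_commute (w : FreeGroup (Fin 2))
    (h0 : w * FreeGroup.of 0 = FreeGroup.of 0 * w)
    (h1 : w * FreeGroup.of 1 = FreeGroup.of 1 * w) : w = 1 := by
  by_contra hw
  have hL : w.toWord ≠ [] := fun h => hw (toWord_eq_nil_iff.mp h)
  have hlen : 1 ≤ w.toWord.length := by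
    cases hl : w.toWord with
    | nil => exact absurd hl hL
    | cons a t => simp
  have hof : ∀ i : Fin 2, (FreeGroup.of i) = mk [(i, true)] := fun i => rfl
  have E0 := congrArg toWord h0
  rw [hof, snoc_toWord, cons_toWord] at E0
  simp only [Bool.not_true] at E0
  have hrep : ∃ b, w.toWord = List.replicate w.toWord.length ((0 : Fin 2), b) := by
    split_ifs at E0 with hA hB hB
    · exact ⟨false, replicate_of_dropLast_eq_tail _ _ hB E0⟩
    · have := congrArg List.length E0
      rw [List.length_dropLast, List.length_cons] at this
      omega
    · have := congrArg List.length E0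
      rw [List.length_append, List.length_tail] at this
      simp at this
      omega
    · exact ⟨true, replicate_of_append_singleton_eq_cons _ _ E0⟩
  obtain ⟨b, hrep⟩ := hrep
  have hhead : w.toWord.head? = some ((0 : Fin 2), b) := by
    rw [hrep]
    cases hn : w.toWord.length with
    | zero => omega
    | succ m => simp [List.replicate_succ]
  have E1 := congrArg toWord h1
  rw [hof, snoc_toWord, cons_toWord] at E1
  simp only [Bool.not_true] at E1
  split_ifs at E1 with hA hB hB
  · rw [hhead] at hB
    simp [Prod.ext_iff] at hB
  · have := congrArg List.length E1
    rw [List.length_dropLast, List.length_cons] at this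
    omega
  · rw [hhead] at hB
    simp [Prod.ext_iff] at hB
  · have := congrArg List.head? E1
    rw [List.head?_append_of_ne_nil _ hL] at this
    rw [hhead] at this
    simp [Prod.ext_iff] at this

end PureBraid

namespace PureBraid

/-- Exponent-sum homomorphism attached to `d : Fin 2 → ℤ`. -/
def Dh (d : Fin 2 → ℤ) : FreeGroup (Fin 2) →* Multiplicative ℤ :=
  FreeGroup.lift (fun i => Multiplicative.ofAdd (d i))

@[simp] lemma Dh_of (d : Fin 2 → ℤ) (i : Fin 2) :
    Dh d (FreeGroup.of i) = Multiplicative.ofAdd (d i) :=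
  FreeGroup.lift_apply_of

lemma Dh_zero : Dh 0 = 1 :=
  FreeGroup.ext_hom _ _ fun i => by simp

lemma Dh_add (d d' : Fin 2 → ℤ) : Dh (d + d') = (Dh d) * (Dh d') :=
  FreeGroup.ext_hom _ _ fun i => by
    simp [Dh_of, ofAdd_add]

lemma Dh_smul (c : ℤ) (d : Fin 2 → ℤ) (w : FreeGroup (Fin 2)) :
    Dh (c • d) w = (Dh d w) ^ c := by
  have h : Dh (c • d) = (Dh d) ^ c := FreeGroup.ext_hom _ _ fun i => by
    have h1 : ((Dh d) ^ c) (FreeGroup.of i) = (Dh d (FreeGroup.of i)) ^ c := rfl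
    rw [h1, Dh_of, Dh_of, ← ofAdd_zsmul]
    congr 1
  rw [h]
  rfl

/-- `Tm χ d` is `d` transported along an endomorphism `χ`. -/
def Tm (χ : FreeGroup (Fin 2) →* FreeGroup (Fin 2)) (d : Fin 2 → ℤ) : Fin 2 → ℤ :=
  fun i => Multiplicative.toAdd (Dh d (χ (FreeGroup.of i)))

lemma Dh_Tm (χ : FreeGroup (Fin 2) →* FreeGroup (Fin 2)) (d : Fin 2 → ℤ) :
    Dh (Tm χ d) = (Dh d).comp χ :=
  FreeGroup.ext_hom _ _ fun i => by simp [Tm]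

lemma Tm_comp (χ χ' : FreeGroup (Fin 2) →* FreeGroup (Fin 2)) (d : Fin 2 → ℤ) :
    Tm χ' (Tm χ d) = Tm (χ.comp χ') d := by
  funext i
  simp [Tm, Dh_Tm]

lemma Tm_id (d : Fin 2 → ℤ) : Tm (MonoidHom.id _) d = d := by
  funext i; simp [Tm]

lemma Tm_add (χ : FreeGroup (Fin 2) →* FreeGroup (Fin 2)) (d d' : Fin 2 → ℤ) :
    Tm χ (d + d') = Tm χ d + Tm χ d' := by
  funext i; simp [Tm, Dh_add, toAdd_mul]

lemma Tm_smul (χ : FreeGroup (Fin 2) →* FreeGroup (Fin 2)) (c : ℤ) (d : Fin 2 → ℤ) :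
    Tm χ (c • d) = c • Tm χ d := by
  funext i
  simp only [Tm, Dh_smul, toAdd_zpow, Pi.smul_apply, smul_eq_mul]

end PureBraid



namespace PureBraid

/-! ### Part C : the isomorphism `P 3 ≃* Multiplicative ℤ × FreeGroup (Fin 2)` -/

/-- Images of the generators under the isomorphism. -/
def fgen : ℕ × ℕ → Multiplicative ℤ × FreeGroup (Fin 2) := fun p =>
  if p = (1, 2) then (Multiplicative.ofAdd 1, (FreeGroup.of 0 * FreeGroup.of 1)⁻¹)
  else if p = (1, 3) then (1, FreeGroup.of 0)
  else if p = (2, 3) then (1, FreeGroup.of 1)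
  else 1

lemma fgen_rels : ∀ r ∈ rels 3, FreeGroup.lift fgen r = 1 := by
  rintro r (((((h | h) | h) | h) | h) | h)
  · obtain ⟨i, j, hne, rfl⟩ := h
    rw [a, FreeGroup.lift_apply_of, fgen]
    split_ifs with h1 h2 h3
    · rw [Prod.mk.injEq] at h1; omega
    · rw [Prod.mk.injEq] at h2; omega
    · rw [Prod.mk.injEq] at h3; omega
    · rfl
  · obtain ⟨i, j, r, s, h1, h2, h3, h4, h5, rfl⟩ := h
    omega
  · obtain ⟨i, j, r, s, h1, h2, h3, h4, h5, rfl⟩ := h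
    omega
  · obtain ⟨i, j, r, h1, h2, h3, h4, rfl⟩ := h
    have hr : r = 1 := by omega
    have hi : i = 2 := by omega
    have hj : j = 3 := by omega
    subst hr hi hj
    simp only [a, map_mul, map_inv, FreeGroup.lift_apply_of, fgen]
    norm_num
  · obtain ⟨i, j, s, h1, h2, h3, h4, rfl⟩ := h
    have hi : i = 1 := by omega
    have hs : s = 2 := by omega
    have hj : j = 3 := by omega
    subst hi hs hj
    simp only [a, map_mul, map_inv, FreeGroup.lift_apply_of, fgen]
    norm_num
    group
  · obtain ⟨i, j, r, s, h1, h2, h3, h4, h5, rfl⟩ := h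
    omega

/-- The forward homomorphism. -/
def fhom : P 3 →* Multiplicative ℤ × FreeGroup (Fin 2) :=
  PresentedGroup.toGroup fgen_rels

lemma rel_eq_one {r : FreeGroup (ℕ × ℕ)} (h : r ∈ rels 3) :
    PresentedGroup.mk (rels 3) r = 1 :=
  (QuotientGroup.eq_one_iff _).mpr (Subgroup.subset_normalClosure h)

lemma A_junk (i j : ℕ) (h : ¬(1 ≤ i ∧ i < j ∧ j ≤ 3)) : A 3 i j = 1 :=
  rel_eq_one (Or.inl (Or.inl (Or.inl (Or.inl (Or.inl ⟨i, j, h, rfl⟩)))))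

lemma relA : (A 3 1 2)⁻¹ * A 3 2 3 * A 3 1 2 = A 3 1 3 * A 3 2 3 * (A 3 1 3)⁻¹ := by
  have h := rel_eq_one (r := (a 1 2)⁻¹ * a 2 3 * a 1 2 * (a 1 3 * a 2 3 * (a 1 3)⁻¹)⁻¹)
    (Or.inl (Or.inl (Or.inr ⟨2, 3, 1, by norm_num⟩)))
  simp only [map_mul, map_inv] at h
  exact mul_inv_eq_one.mp h

lemma relB : (A 3 1 2)⁻¹ * A 3 1 3 * A 3 1 2 =
    A 3 1 3 * A 3 2 3 * A 3 1 3 * (A 3 2 3)⁻¹ * (A 3 1 3)⁻¹ := by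
  have h := rel_eq_one
    (r := (a 1 2)⁻¹ * a 1 3 * a 1 2 * (a 1 3 * a 2 3 * a 1 3 * (a 2 3)⁻¹ * (a 1 3)⁻¹)⁻¹)
    (Or.inl (Or.inr ⟨1, 3, 2, by norm_num⟩))
  simp only [map_mul, map_inv] at h
  exact mul_inv_eq_one.mp h

/-- The central element of `P 3`. -/
def z3 : P 3 := A 3 1 2 * A 3 1 3 * A 3 2 3

lemma comm_zb : Commute z3 (A 3 1 3) := by
  have hba : A 3 1 3 * A 3 1 2 =
      A 3 1 2 * (A 3 1 3 * A 3 2 3 * A 3 1 3 * (A 3 2 3)⁻¹ * (A 3 1 3)⁻¹) := by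
    rw [← relB]; group
  show z3 * A 3 1 3 = A 3 1 3 * z3
  unfold z3
  calc A 3 1 2 * A 3 1 3 * A 3 2 3 * A 3 1 3
      = A 3 1 2 * (A 3 1 3 * A 3 2 3 * A 3 1 3 * (A 3 2 3)⁻¹ * (A 3 1 3)⁻¹) *
        (A 3 1 3 * A 3 2 3) := by group
    _ = (A 3 1 3 * A 3 1 2) * (A 3 1 3 * A 3 2 3) := by rw [← hba]
    _ = A 3 1 3 * (A 3 1 2 * A 3 1 3 * A 3 2 3) := by group

lemma comm_zc : Commute z3 (A 3 2 3) := by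
  have hca : A 3 2 3 * A 3 1 2 = A 3 1 2 * (A 3 1 3 * A 3 2 3 * (A 3 1 3)⁻¹) := by
    rw [← relA]; group
  show z3 * A 3 2 3 = A 3 2 3 * z3
  unfold z3
  calc A 3 1 2 * A 3 1 3 * A 3 2 3 * A 3 2 3
      = A 3 1 2 * (A 3 1 3 * A 3 2 3 * (A 3 1 3)⁻¹) * (A 3 1 3 * A 3 2 3) := by group
    _ = (A 3 2 3 * A 3 1 2) * (A 3 1 3 * A 3 2 3) := by rw [← hca]
    _ = A 3 2 3 * (A 3 1 2 * A 3 1 3 * A 3 2 3) := by group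

/-- The map on the free factor. -/
def whom : FreeGroup (Fin 2) →* P 3 :=
  FreeGroup.lift (fun i => if i = 0 then A 3 1 3 else A 3 2 3)

lemma comm_z_whom (w : FreeGroup (Fin 2)) : Commute z3 (whom w) := by
  induction w using FreeGroup.induction_on with
  | C1 => exact Commute.one_right _
  | of x =>
    have : whom (FreeGroup.of x) = if x = 0 then A 3 1 3 else A 3 2 3 :=
      FreeGroup.lift_apply_of
    rw [this]
    split_ifs
    · exact comm_zb
    · exact comm_zc
  | inv_of x ih => rw [map_inv]; exact ih.inv_right
  | mul x y ihx ihy => rw [map_mul]; exact ihx.mul_right ihy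

/-- The reverse homomorphism. -/
def ghom : Multiplicative ℤ × FreeGroup (Fin 2) →* P 3 :=
  MonoidHom.noncommCoprod (zpowersHom (P 3) z3) whom
    (fun m w => by
      simpa using (Commute.zpow_left (comm_z_whom w) (Multiplicative.toAdd m)))

lemma ghom_apply (t : Multiplicative ℤ) (w : FreeGroup (Fin 2)) :
    ghom (t, w) = z3 ^ (Multiplicative.toAdd t) * whom w := rfl

lemma fhom_of (p : ℕ × ℕ) : fhom (PresentedGroup.of p) = fgen p :=
  PresentedGroup.toGroup.of _

lemma fhom_z3 : fhom z3 = (Multiplicative.ofAdd 1, 1) := by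
  have h12 : fhom (A 3 1 2) = fgen (1, 2) := fhom_of _
  have h13 : fhom (A 3 1 3) = fgen (1, 3) := fhom_of _
  have h23 : fhom (A 3 2 3) = fgen (2, 3) := fhom_of _
  unfold z3
  rw [map_mul, map_mul, h12, h13, h23]
  simp only [fgen]
  norm_num

lemma fhom_ghom : ∀ p, fhom (ghom p) = p := by
  rintro ⟨t, w⟩
  have hz : fhom (z3 ^ (Multiplicative.toAdd t)) = (t, 1) := by
    rw [map_zpow, fhom_z3]
    rw [Prod.ext_iff]
    constructor
    · show (Multiplicative.ofAdd 1) ^ (Multiplicative.toAdd t) = t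
      rw [← ofAdd_zsmul]
      simp
    · simp
  have hw : fhom (whom w) = (1, w) := by
    have key : fhom.comp whom = MonoidHom.inr (Multiplicative ℤ) (FreeGroup (Fin 2)) := by
      apply FreeGroup.ext_hom
      intro i
      fin_cases i
      · show fhom (whom (FreeGroup.of 0)) = _
        rw [show whom (FreeGroup.of 0) = A 3 1 3 from FreeGroup.lift_apply_of]
        rw [show A 3 1 3 = PresentedGroup.of (1, 3) from rfl, fhom_of]
        rfl
      · show fhom (whom (FreeGroup.of 1)) = _
        rw [show whom (FreeGroup.of 1) = A 3 2 3 from FreeGroup.lift_apply_of]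
        rw [show A 3 2 3 = PresentedGroup.of (2, 3) from rfl, fhom_of]
        rfl
    exact DFunLike.congr_fun key w
  rw [ghom_apply, map_mul, hz, hw, Prod.mk_mul_mk, mul_one, one_mul]

lemma ghom_fhom : ∀ x, ghom (fhom x) = x := by
  have key : ghom.comp fhom = MonoidHom.id (P 3) := by
    apply PresentedGroup.ext
    rintro ⟨i, j⟩
    show ghom (fhom (PresentedGroup.of (i, j))) = PresentedGroup.of (i, j)
    rw [fhom_of, fgen]
    split_ifs with h1 h2 h3
    · rw [Prod.mk.injEq] at h1
      obtain ⟨rfl, rfl⟩ := h1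
      rw [ghom_apply]
      have hw : whom ((FreeGroup.of 0 * FreeGroup.of 1)⁻¹) = (A 3 1 3 * A 3 2 3)⁻¹ := by
        rw [map_inv, map_mul]
        rw [show whom (FreeGroup.of 0) = A 3 1 3 from FreeGroup.lift_apply_of,
          show whom (FreeGroup.of (1 : Fin 2)) = A 3 2 3 from FreeGroup.lift_apply_of]
      rw [hw]
      show z3 ^ (1 : ℤ) * (A 3 1 3 * A 3 2 3)⁻¹ = A 3 1 2
      rw [zpow_one]
      unfold z3
      group
    · rw [Prod.mk.injEq] at h2
      obtain ⟨rfl, rfl⟩ := h2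
      rw [ghom_apply]
      show z3 ^ (0 : ℤ) * whom (FreeGroup.of 0) = _
      rw [zpow_zero, one_mul]
      exact FreeGroup.lift_apply_of
    · rw [Prod.mk.injEq] at h3
      obtain ⟨rfl, rfl⟩ := h3
      rw [ghom_apply]
      show z3 ^ (0 : ℤ) * whom (FreeGroup.of 1) = _
      rw [zpow_zero, one_mul]
      exact FreeGroup.lift_apply_of
    · rw [map_one]
      rw [Prod.mk.injEq] at h1 h2 h3
      exact (A_junk i j (by omega)).symm
  intro x
  exact DFunLike.congr_fun key x

/-- The isomorphism `P 3 ≃* Multiplicative ℤ × FreeGroup (Fin 2)`. -/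
def isoP3 : P 3 ≃* Multiplicative ℤ × FreeGroup (Fin 2) :=
  MonoidHom.toMulEquiv fhom ghom
    (MonoidHom.ext ghom_fhom) (MonoidHom.ext fhom_ghom)

end PureBraid


namespace PureBraid

/-! ### Part D : the automorphism group -/

/-- Sign of an element of `Multiplicative (ZMod 2)`. -/
def sgn (e : Multiplicative (ZMod 2)) : ℤ := if e = 1 then 1 else -1

lemma sgn_mul (e e' : Multiplicative (ZMod 2)) : sgn (e * e') = sgn e * sgn e' := by
  revert e e'; decide

lemma sgn_sq (e : Multiplicative (ZMod 2)) : sgn e * sgn e = 1 := by revert e; decide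

lemma sgn_one : sgn 1 = 1 := rfl

lemma sgn_eq_one_iff (e : Multiplicative (ZMod 2)) : sgn e = 1 ↔ e = 1 := by
  revert e; decide

/-- Underlying function of the action of `ℤ/2 × Aut(F₂)` on `ℤ²`. -/
def actFun (s : ℤ) (χ : FreeGroup (Fin 2) →* FreeGroup (Fin 2)) :
    Multiplicative (Fin 2 → ℤ) → Multiplicative (Fin 2 → ℤ) :=
  fun n => Multiplicative.ofAdd (s • Tm χ (Multiplicative.toAdd n))

lemma actFun_comp (s s' : ℤ) (χ χ' : FreeGroup (Fin 2) →* FreeGroup (Fin 2))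
    (n : Multiplicative (Fin 2 → ℤ)) :
    actFun s χ (actFun s' χ' n) = actFun (s * s') (χ'.comp χ) n := by
  unfold actFun
  rw [toAdd_ofAdd, Tm_smul, ← Tm_comp, smul_smul]

lemma actFun_id (n : Multiplicative (Fin 2 → ℤ)) : actFun 1 (MonoidHom.id _) n = n := by
  unfold actFun
  rw [Tm_id, one_smul, ofAdd_toAdd]

lemma mulaut_inv_comp_hom (ψ : MulAut (FreeGroup (Fin 2))) :
    (ψ⁻¹ : MulAut (FreeGroup (Fin 2))).toMonoidHom.comp ψ.toMonoidHom = MonoidHom.id _ := by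
  ext x
  exact MulAut.inv_apply_self _ ψ (FreeGroup.of x)

lemma mulaut_comp_inv_hom (ψ : MulAut (FreeGroup (Fin 2))) :
    ψ.toMonoidHom.comp (ψ⁻¹ : MulAut (FreeGroup (Fin 2))).toMonoidHom = MonoidHom.id _ := by
  ext x
  exact MulAut.apply_inv_self _ ψ (FreeGroup.of x)

/-- The action as a `MulAut`. -/
def act (e : Multiplicative (ZMod 2)) (ψ : MulAut (FreeGroup (Fin 2))) :
    MulAut (Multiplicative (Fin 2 → ℤ)) :=
  MulEquiv.mk'
    { toFun := actFun (sgn e) (ψ⁻¹ : MulAut (FreeGroup (Fin 2))).toMonoidHom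
      invFun := actFun (sgn e) ψ.toMonoidHom
      left_inv := fun n => by
        rw [actFun_comp, sgn_sq, mulaut_inv_comp_hom, actFun_id]
      right_inv := fun n => by
        rw [actFun_comp, sgn_sq, mulaut_comp_inv_hom, actFun_id] }
    (fun n m => by
      show actFun _ _ (n * m) = actFun _ _ n * actFun _ _ m
      unfold actFun
      rw [← ofAdd_add, ← smul_add, ← Tm_add]
      rfl)

lemma act_apply (e : Multiplicative (ZMod 2)) (ψ : MulAut (FreeGroup (Fin 2)))
    (n : Multiplicative (Fin 2 → ℤ)) :
    act e ψ n = actFun (sgn e) (ψ⁻¹ : MulAut (FreeGroup (Fin 2))).toMonoidHom n := rfl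

lemma inv_mul_hom (ψ ψ' : MulAut (FreeGroup (Fin 2))) :
    ((ψ * ψ')⁻¹ : MulAut (FreeGroup (Fin 2))).toMonoidHom =
      (ψ'⁻¹ : MulAut (FreeGroup (Fin 2))).toMonoidHom.comp
        (ψ⁻¹ : MulAut (FreeGroup (Fin 2))).toMonoidHom := by
  rw [mul_inv_rev]
  ext x
  rfl

/-- The action homomorphism `φ`. -/
def phiD : (Multiplicative (ZMod 2) × MulAut (FreeGroup (Fin 2))) →*
    MulAut (Multiplicative (Fin 2 → ℤ)) :=
  MonoidHom.mk' (fun p => act p.1 p.2) (by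
    rintro ⟨e, ψ⟩ ⟨e', ψ'⟩
    apply MulEquiv.ext
    intro n
    rw [MulAut.mul_apply, act_apply, act_apply, act_apply, actFun_comp]
    show actFun (sgn (e * e')) ((ψ * ψ')⁻¹ : MulAut (FreeGroup (Fin 2))).toMonoidHom n = _
    rw [sgn_mul, inv_mul_hom])

end PureBraid


namespace PureBraid

/-- Translation automorphism of `ℤ × F₂` attached to `d : Fin 2 → ℤ`. -/
def An (d : Fin 2 → ℤ) : (Multiplicative ℤ × FreeGroup (Fin 2)) ≃*
    (Multiplicative ℤ × FreeGroup (Fin 2)) :=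
  MulEquiv.mk'
    { toFun := fun p => (p.1 * Dh d p.2, p.2)
      invFun := fun p => (p.1 * (Dh d p.2)⁻¹, p.2)
      left_inv := fun p => by simp [mul_assoc]
      right_inv := fun p => by simp [mul_assoc] }
    (fun p q => by
      show (p.1 * q.1 * Dh d (p.2 * q.2), p.2 * q.2) =
        (p.1 * Dh d p.2, p.2) * (q.1 * Dh d q.2, q.2)
      rw [Prod.mk_mul_mk, map_mul]
      congr 1
      exact mul_mul_mul_comm p.1 q.1 (Dh d p.2) (Dh d q.2))

lemma An_apply (d : Fin 2 → ℤ) (p : Multiplicative ℤ × FreeGroup (Fin 2)) :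
    An d p = (p.1 * Dh d p.2, p.2) := rfl

/-- Diagonal automorphism of `ℤ × F₂` attached to a sign and an automorphism of `F₂`. -/
def Sa (e : Multiplicative (ZMod 2)) (ψ : MulAut (FreeGroup (Fin 2))) :
    (Multiplicative ℤ × FreeGroup (Fin 2)) ≃* (Multiplicative ℤ × FreeGroup (Fin 2)) :=
  MulEquiv.mk'
    { toFun := fun p => (p.1 ^ (sgn e), ψ p.2)
      invFun := fun p => (p.1 ^ (sgn e), ψ⁻¹ p.2)
      left_inv := fun p => by
        show ((p.1 ^ sgn e) ^ sgn e, ψ⁻¹ (ψ p.2)) = p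
        rw [← zpow_mul, sgn_sq, zpow_one, MulAut.inv_apply_self]
      right_inv := fun p => by
        show ((p.1 ^ sgn e) ^ sgn e, ψ (ψ⁻¹ p.2)) = p
        rw [← zpow_mul, sgn_sq, zpow_one, MulAut.apply_inv_self] }
    (fun p q => by
      show ((p.1 * q.1) ^ sgn e, ψ (p.2 * q.2)) = (p.1 ^ sgn e, ψ p.2) * (q.1 ^ sgn e, ψ q.2)
      rw [Prod.mk_mul_mk, map_mul, mul_zpow])

lemma Sa_apply (e : Multiplicative (ZMod 2)) (ψ : MulAut (FreeGroup (Fin 2)))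
    (p : Multiplicative ℤ × FreeGroup (Fin 2)) :
    Sa e ψ p = (p.1 ^ (sgn e), ψ p.2) := rfl

lemma Sa_symm_apply (e : Multiplicative (ZMod 2)) (ψ : MulAut (FreeGroup (Fin 2)))
    (p : Multiplicative ℤ × FreeGroup (Fin 2)) :
    (Sa e ψ).symm p = (p.1 ^ (sgn e), ψ⁻¹ p.2) := rfl

/-- The homomorphism `ℤ² →* Aut(ℤ × F₂)`. -/
def fN : Multiplicative (Fin 2 → ℤ) →* MulAut (Multiplicative ℤ × FreeGroup (Fin 2)) :=
  MonoidHom.mk' (fun n => An (Multiplicative.toAdd n)) (by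
    intro n m
    apply MulEquiv.ext
    intro p
    rw [MulAut.mul_apply, An_apply, An_apply, An_apply]
    show (p.1 * Dh (Multiplicative.toAdd n + Multiplicative.toAdd m) p.2, p.2) = _
    rw [Dh_add]
    show (p.1 * (Dh (Multiplicative.toAdd n) p.2 * Dh (Multiplicative.toAdd m) p.2), p.2) = _
    rw [Prod.mk.injEq]
    constructor
    · rw [mul_comm (Dh (Multiplicative.toAdd n) p.2)]
      rw [← mul_assoc]
    · rfl)

/-- The homomorphism `ℤ/2 × Aut(F₂) →* Aut(ℤ × F₂)`. -/
def fH : (Multiplicative (ZMod 2) × MulAut (FreeGroup (Fin 2))) →*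
    MulAut (Multiplicative ℤ × FreeGroup (Fin 2)) :=
  MonoidHom.mk' (fun h => Sa h.1 h.2) (by
    rintro ⟨e, ψ⟩ ⟨e', ψ'⟩
    apply MulEquiv.ext
    intro p
    rw [MulAut.mul_apply, Sa_apply, Sa_apply, Sa_apply]
    show (p.1 ^ sgn (e * e'), (ψ * ψ') p.2) = _
    rw [sgn_mul, mul_comm (sgn e), zpow_mul]
    rfl)

lemma fH_inv_apply (e : Multiplicative (ZMod 2)) (ψ : MulAut (FreeGroup (Fin 2)))
    (p : Multiplicative ℤ × FreeGroup (Fin 2)) :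
    (fH (e, ψ))⁻¹ p = (p.1 ^ (sgn e), ψ⁻¹ p.2) := by
  rw [MulAut.inv_def]
  exact Sa_symm_apply e ψ p

lemma compat : ∀ h, fN.comp (phiD h).toMonoidHom =
    (MulAut.conj (fH h)).toMonoidHom.comp fN := by
  rintro ⟨e, ψ⟩
  refine MonoidHom.ext fun n => MulEquiv.ext fun p => ?_
  show An (Multiplicative.toAdd (phiD (e, ψ) n)) p = (MulAut.conj (fH (e, ψ))
    (An (Multiplicative.toAdd n))) p
  rw [MulAut.conj_apply, MulAut.mul_apply, MulAut.mul_apply, fH_inv_apply]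
  rw [An_apply]
  show An _ p = Sa e ψ ((p.1 ^ sgn e * Dh (Multiplicative.toAdd n) (ψ⁻¹ p.2), ψ⁻¹ p.2))
  rw [Sa_apply]
  have h2 : ψ ((ψ⁻¹ : MulAut (FreeGroup (Fin 2))) p.2) = p.2 := MulAut.apply_inv_self _ ψ p.2
  rw [An_apply]
  have h1 : Multiplicative.toAdd (phiD (e, ψ) n) =
      sgn e • Tm (ψ⁻¹ : MulAut (FreeGroup (Fin 2))).toMonoidHom (Multiplicative.toAdd n) := rfl
  rw [h1]
  rw [Prod.mk.injEq]
  refine ⟨?_, h2.symm⟩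
  rw [mul_zpow, ← zpow_mul, sgn_sq, zpow_one]
  congr 1
  rw [Dh_smul, Dh_Tm]
  rfl

/-- The homomorphism from the semidirect product to `Aut(ℤ × F₂)`. -/
def Phi : (Multiplicative (Fin 2 → ℤ)) ⋊[phiD]
    (Multiplicative (ZMod 2) × MulAut (FreeGroup (Fin 2))) →*
    MulAut (Multiplicative ℤ × FreeGroup (Fin 2)) :=
  SemidirectProduct.lift fN fH compat

end PureBraid


namespace PureBraid

lemma Phi_mk (n : Multiplicative (Fin 2 → ℤ))
    (h : Multiplicative (ZMod 2) × MulAut (FreeGroup (Fin 2))) :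
    Phi ⟨n, h⟩ = fN n * fH h := rfl

lemma Phi_inj : Function.Injective Phi := by
  rw [injective_iff_map_eq_one]
  rintro ⟨n, e, ψ⟩ hx
  have hx' : fN n * fH (e, ψ) = 1 := hx
  have happ : ∀ p : Multiplicative ℤ × FreeGroup (Fin 2),
      An (Multiplicative.toAdd n) (Sa e ψ p) = p := fun p => by
    have h := congrArg (fun F : MulAut (Multiplicative ℤ × FreeGroup (Fin 2)) => F p) hx'
    exact h
  have h1 := happ (Multiplicative.ofAdd 1, 1)
  rw [Sa_apply, An_apply] at h1
  simp only [map_one, mul_one] at h1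
  have he : e = 1 := by
    rw [Prod.mk.injEq] at h1
    have h1' := h1.1
    rw [← ofAdd_zsmul, smul_eq_mul, mul_one] at h1'
    exact (sgn_eq_one_iff e).mp (Multiplicative.ofAdd.injective h1')
  have hgen : ∀ i : Fin 2, ψ (FreeGroup.of i) = FreeGroup.of i ∧
      Multiplicative.toAdd n i = 0 := by
    intro i
    have h2 := happ (1, FreeGroup.of i)
    rw [Sa_apply, An_apply] at h2
    rw [Prod.mk.injEq] at h2
    obtain ⟨h2a, h2b⟩ := h2
    refine ⟨h2b, ?_⟩
    rw [one_zpow, one_mul, h2b, Dh_of] at h2a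
    simpa using Multiplicative.ofAdd.injective h2a
  have hψ : ψ = 1 := by
    apply MulEquiv.ext
    intro w
    show ψ w = w
    induction w using FreeGroup.induction_on with
    | C1 => exact map_one ψ
    | of x => exact (hgen x).1
    | inv_of x ih => rw [map_inv, ih]
    | mul x y ihx ihy => rw [map_mul, ihx, ihy]
  have hn : n = 1 := by
    have : Multiplicative.toAdd n = 0 := funext fun i => (hgen i).2
    calc n = Multiplicative.ofAdd (Multiplicative.toAdd n) := rfl
      _ = Multiplicative.ofAdd 0 := by rw [this]
      _ = 1 := rfl
  rw [hn, he, hψ]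
  rfl

lemma center_snd (θ : (Multiplicative ℤ × FreeGroup (Fin 2)) ≃*
    (Multiplicative ℤ × FreeGroup (Fin 2))) (t : Multiplicative ℤ) : (θ (t, 1)).2 = 1 := by
  have hc : ∀ p : Multiplicative ℤ × FreeGroup (Fin 2), (t, (1 : FreeGroup (Fin 2))) * p =
      p * (t, 1) := fun p => Prod.ext (mul_comm _ _) (by simp)
  have hcm : ∀ p, θ (t, 1) * p = p * θ (t, 1) := fun p => by
    conv_lhs => rw [← MulEquiv.apply_symm_apply θ p]
    rw [← map_mul, hc, map_mul, MulEquiv.apply_symm_apply]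
  apply freeGroup_eq_one_of_commute
  · have h := congrArg Prod.snd (hcm (1, FreeGroup.of 0))
    simpa using h
  · have h := congrArg Prod.snd (hcm (1, FreeGroup.of 1))
    simpa using h

lemma aut_fst_one (θ : (Multiplicative ℤ × FreeGroup (Fin 2)) ≃*
    (Multiplicative ℤ × FreeGroup (Fin 2))) (t : Multiplicative ℤ) :
    θ (t, 1) = (Multiplicative.ofAdd
      ((Multiplicative.toAdd (θ (Multiplicative.ofAdd 1, 1)).1) * Multiplicative.toAdd t), 1) := by
  set E := Multiplicative.toAdd (θ (Multiplicative.ofAdd 1, 1)).1 with hE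
  have hθ1 : θ (Multiplicative.ofAdd 1, 1) = (Multiplicative.ofAdd E, 1) :=
    Prod.ext rfl (center_snd θ _)
  have h1 : (t, (1 : FreeGroup (Fin 2))) =
      (Multiplicative.ofAdd 1, (1 : FreeGroup (Fin 2))) ^ (Multiplicative.toAdd t) := by
    refine Prod.ext ?_ ?_
    · show t = (Multiplicative.ofAdd 1 : Multiplicative ℤ) ^ (Multiplicative.toAdd t)
      rw [← ofAdd_zsmul, smul_eq_mul, mul_one, ofAdd_toAdd]
    · show (1 : FreeGroup (Fin 2)) = (1 : FreeGroup (Fin 2)) ^ (Multiplicative.toAdd t)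
      rw [one_zpow]
  rw [h1, map_zpow, hθ1]
  refine Prod.ext ?_ ?_
  · show (Multiplicative.ofAdd E : Multiplicative ℤ) ^ (Multiplicative.toAdd t) = _
    rw [← ofAdd_zsmul, smul_eq_mul, mul_comm]
  · show (1 : FreeGroup (Fin 2)) ^ (Multiplicative.toAdd t) = 1
    rw [one_zpow]

lemma Phi_surj : Function.Surjective Phi := by
  intro θ
  classical
  let d : Fin 2 → ℤ := fun i => Multiplicative.toAdd (θ (1, FreeGroup.of i)).1
  have hpair : ∀ w w' : FreeGroup (Fin 2),
      ((1 : Multiplicative ℤ), w * w') = (1, w) * (1, w') := fun w w' =>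
    Prod.ext (by simp) rfl
  let ψ : MulAut (FreeGroup (Fin 2)) :=
    { toFun := fun w => (θ (1, w)).2
      invFun := fun w => (θ.symm (1, w)).2
      left_inv := fun w => by
        have hq : ((1 : Multiplicative ℤ), (θ (1, w)).2) =
            θ (1, w) * (((θ (1, w)).1)⁻¹, 1) :=
          Prod.ext (by simp) (by simp)
        show (θ.symm (1, (θ (1, w)).2)).2 = w
        rw [hq, map_mul, MulEquiv.symm_apply_apply, Prod.snd_mul, center_snd θ.symm, mul_one]
      right_inv := fun w => by
        have hq : ((1 : Multiplicative ℤ), (θ.symm (1, w)).2) =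
            θ.symm (1, w) * (((θ.symm (1, w)).1)⁻¹, 1) :=
          Prod.ext (by simp) (by simp)
        show (θ (1, (θ.symm (1, w)).2)).2 = w
        rw [hq, map_mul, MulEquiv.apply_symm_apply, Prod.snd_mul, center_snd θ, mul_one]
      map_mul' := fun w w' => by
        show (θ (1, w * w')).2 = (θ (1, w)).2 * (θ (1, w')).2
        rw [hpair, map_mul, Prod.snd_mul] }
  let e : ℤ := Multiplicative.toAdd (θ (Multiplicative.ofAdd 1, 1)).1
  let e' : ℤ := Multiplicative.toAdd (θ.symm (Multiplicative.ofAdd 1, 1)).1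
  have hee : e' * e = 1 := by
    have h := θ.symm_apply_apply (Multiplicative.ofAdd 1, 1)
    rw [aut_fst_one θ, aut_fst_one θ.symm] at h
    have h1 := congrArg Prod.fst h
    simp only [toAdd_ofAdd] at h1
    have h2 := Multiplicative.ofAdd.injective h1
    simpa [e, e', mul_one] using h2
  have he : e = 1 ∨ e = -1 :=
    Int.isUnit_iff.mp (IsUnit.of_mul_eq_one (a := e) e' (by rw [mul_comm]; exact hee))
  let eps : Multiplicative (ZMod 2) := if e = 1 then 1 else Multiplicative.ofAdd (1 : ZMod 2)
  have hsgn : sgn eps = e := by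
    rcases he with h | h
    · have : eps = 1 := if_pos h
      rw [this, sgn_one, h]
    · have h' : e ≠ 1 := by rw [h]; norm_num
      have : eps = Multiplicative.ofAdd (1 : ZMod 2) := if_neg h'
      rw [this, sgn, if_neg (by decide), h]
  have hfirst : ∀ w, (θ (1, w)).1 = Dh d w := by
    have key : (MonoidHom.fst (Multiplicative ℤ) (FreeGroup (Fin 2))).comp
        (θ.toMonoidHom.comp (MonoidHom.inr (Multiplicative ℤ) (FreeGroup (Fin 2)))) = Dh d :=
      FreeGroup.ext_hom _ _ fun i => by
        show (θ (1, FreeGroup.of i)).1 = Dh d (FreeGroup.of i)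
        rw [Dh_of]
        rfl
    exact fun w => DFunLike.congr_fun key w
  let nn : Fin 2 → ℤ := Tm (ψ⁻¹ : MulAut (FreeGroup (Fin 2))).toMonoidHom d
  refine ⟨⟨Multiplicative.ofAdd nn, (eps, ψ)⟩, ?_⟩
  apply MulEquiv.ext
  rintro ⟨t, w⟩
  show An (Multiplicative.toAdd (Multiplicative.ofAdd nn)) (Sa eps ψ (t, w)) = θ (t, w)
  rw [Sa_apply, An_apply, hsgn]
  have hsplit : θ (t, w) = θ (t, 1) * θ (1, w) := by
    rw [← map_mul]
    congr 1
    exact Prod.ext (by simp) (by simp)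
  rw [hsplit, aut_fst_one θ]
  have hw : θ (1, w) = (Dh d w, ψ w) := Prod.ext (hfirst w) rfl
  rw [hw, Prod.mk_mul_mk, one_mul]
  refine Prod.ext ?_ rfl
  show (t : Multiplicative ℤ) ^ e * Dh nn (ψ w) = Multiplicative.ofAdd (e * Multiplicative.toAdd t) * Dh d w
  have h1 : Multiplicative.ofAdd (e * Multiplicative.toAdd t) = t ^ e := by
    rw [← smul_eq_mul, ofAdd_zsmul, ofAdd_toAdd]
  have h2 : Dh nn (ψ w) = Dh d w := by
    have h3 := DFunLike.congr_fun
      (Dh_Tm (ψ⁻¹ : MulAut (FreeGroup (Fin 2))).toMonoidHom d) (ψ w)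
    rw [show (Dh nn) (ψ w) =
      ((Dh d).comp (ψ⁻¹ : MulAut (FreeGroup (Fin 2))).toMonoidHom) (ψ w) from h3]
    show Dh d ((ψ⁻¹ : MulAut (FreeGroup (Fin 2))) (ψ w)) = Dh d w
    rw [MulAut.inv_apply_self]
  rw [← h1, h2]

/-- The semidirect-product description of the automorphism group. -/
noncomputable def PhiEquiv : (Multiplicative (Fin 2 → ℤ)) ⋊[phiD]
    (Multiplicative (ZMod 2) × MulAut (FreeGroup (Fin 2))) ≃*
    MulAut (Multiplicative ℤ × FreeGroup (Fin 2)) :=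
  MulEquiv.ofBijective Phi ⟨Phi_inj, Phi_surj⟩

end PureBraid

namespace PureBraid

/-- The three strand pure braid group `P_3` is isomorphic to `ℤ × F_2`, where `F_2` is
the free group of rank `2`, and `Aut(P_3) ≅ ℤ² ⋊ (ℤ/2ℤ × Aut(F_2))` for a suitable
action of `ℤ/2ℤ × Aut(F_2)` on `ℤ²`. -/
theorem P3_iso_and_aut :
    Nonempty (P 3 ≃* Multiplicative ℤ × FreeGroup (Fin 2)) ∧
    ∃ φ : (Multiplicative (ZMod 2) × MulAut (FreeGroup (Fin 2))) →*
        MulAut (Multiplicative (Fin 2 → ℤ)),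
      Nonempty (MulAut (P 3) ≃*
        (Multiplicative (Fin 2 → ℤ)) ⋊[φ]
          (Multiplicative (ZMod 2) × MulAut (FreeGroup (Fin 2)))) := by
  exact ⟨⟨isoP3⟩, phiD, ⟨(MulAut.congr isoP3).trans PhiEquiv.symm⟩⟩

end PureBraid
end

section
/- For n ≥ 2, the assignments ρ_0 ↦ σ_1^2 and ρ_j ↦ σ_{j+1} for 1 ≤ j ≤ n-1 extend to a group homomorphism B(r,n) → B_{n+1}, and this homomorphism sends ζ_n = (ρ_0ρ_1⋯ρ_{n-1})^n to Z_{n+1} = (σ_1σ_2⋯σ_n)^{n+1}. -/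
/-!
The monomial braid group `B(r,n)` (independent of `r`) is presented with generators
`ρ_0, …, ρ_{n-1}` and relations `(ρ_0ρ_1)^2 = (ρ_1ρ_0)^2`,
`ρ_iρ_{i+1}ρ_i = ρ_{i+1}ρ_iρ_{i+1}` (`1 ≤ i ≤ n-2`), `ρ_iρ_j = ρ_jρ_i` (`|i-j| > 1`).
We realize it as a presented group on generators indexed by `ℕ`, where the superfluous
generators `ρ_k` for `k ≥ n` are killed by extra relators.  The full monomial group
`G(r,n)` is the quotient of `B(r,n)` by the relations `ρ_0^r = ρ_1^2 = ⋯ = ρ_{n-1}^2 = 1`,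
and the pure monomial braid group `P(r,n)` is the kernel of the quotient map.
-/

namespace MonomialBraid

/-- `C_j = ρ_{j-1} ⋯ ρ_2 ρ_1 ρ_0^r ρ_1⁻¹ ρ_2⁻¹ ⋯ ρ_{j-1}⁻¹` for `1 ≤ j ≤ n`. -/
def CC (r n j : ℕ) : B n :=
  (((List.range (j - 1)).reverse.map fun k => rh n (k + 1)).prod) * rh n 0 ^ r *
    ((((List.range (j - 1)).reverse.map fun k => rh n (k + 1)).prod))⁻¹

/-- `A^{(q)}(i,j) = X_i^{q-r} ⋅ ρ_{j-1} ⋯ ρ_{i+1} ρ_i^2 ρ_{i+1}⁻¹ ⋯ ρ_{j-1}⁻¹ ⋅ X_i^{r-q}`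
for `1 ≤ i < j ≤ n`, `1 ≤ q ≤ r`. -/
def Aq (r n i j q : ℕ) : B n :=
  XX n i ^ ((q : ℤ) - (r : ℤ)) *
    ((((List.range (j - 1 - i)).reverse.map fun k => rh n (i + 1 + k)).prod) * rh n i ^ 2 *
      ((((List.range (j - 1 - i)).reverse.map fun k => rh n (i + 1 + k)).prod))⁻¹) *
    XX n i ^ ((r : ℤ) - (q : ℤ))

/-- `A^{[q]}(i,j) = A^{(q)}(i,j) A^{(q+1)}(i,j) ⋯ A^{(r-1)}(i,j)` (for `q < r`). -/
def Abr (r n i j q : ℕ) : B n :=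
  ((List.range (r - q)).map fun t => Aq r n i j (q + t)).prod

/-- `V^{(q)}(i,j) = A^{(q)}(i,j) A^{(q)}(i+1,j) ⋯ A^{(q)}(j-1,j)`. -/
def VV (r n i j q : ℕ) : B n :=
  ((List.range (j - i)).map fun t => Aq r n (i + t) j q).prod

/-- `D_k = A^{[1]}(k-1,k) A^{[1]}(k-2,k) ⋯ A^{[1]}(1,k) ⋅ C_k ⋅ V^{(r)}(1,k)`. -/
def DD (r n k : ℕ) : B n :=
  (((List.range (k - 1)).map fun t => Abr r n (k - 1 - t) k 1).prod) * CC r n k * VV r n 1 k r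

/-- The relations defining the full monomial group `G(r,n)` as a quotient of `B(r,n)`:
`ρ_0^r = ρ_1^2 = ⋯ = ρ_{n-1}^2 = 1`. -/
def grels (r n : ℕ) : Set (B n) :=
  {w | w = rh n 0 ^ r} ∪ {w | ∃ i, 1 ≤ i ∧ i ≤ n - 1 ∧ w = rh n i ^ 2}

/-- The normal closure of the relations of `G(r,n)` in `B(r,n)`; thus
`G(r,n) = B(r,n) ⧸ NG r n`. -/
def NG (r n : ℕ) : Subgroup (B n) := Subgroup.normalClosure (grels r n)

instance NG_normal (r n : ℕ) : (NG r n).Normal := Subgroup.normalClosure_normal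

/-- The pure monomial braid group `P(r,n)`, the kernel of the quotient map
`B(r,n) → G(r,n)`. -/
def Pm (r n : ℕ) : Subgroup (B n) := MonoidHom.ker (QuotientGroup.mk' (NG r n))


/-- Generator `σ_k` of the free group for the Artin braid group. -/
def sg (k : ℕ) : FreeGroup ℕ := FreeGroup.of k

/-- Relators of the Artin braid group `B_m` on generators `σ_1, …, σ_{m-1}`
(indexed by `ℕ`, with the junk generators `σ_0` and `σ_k`, `k ≥ m`, killed). -/
def arels (m : ℕ) : Set (FreeGroup ℕ) :=
  {w | ∃ k, (k = 0 ∨ m ≤ k) ∧ w = sg k} ∪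
  {w | ∃ i, 1 ≤ i ∧ i + 1 ≤ m - 1 ∧
      w = sg i * sg (i + 1) * sg i * (sg (i + 1) * sg i * sg (i + 1))⁻¹} ∪
  {w | ∃ i j, 1 ≤ i ∧ i + 2 ≤ j ∧ j ≤ m - 1 ∧ w = sg i * sg j * (sg j * sg i)⁻¹}

/-- The Artin braid group `B_m`. -/
abbrev ArtinB (m : ℕ) := PresentedGroup (arels m)

/-- The generator `σ_k` of `B_m`. -/
def sig (m k : ℕ) : ArtinB m := PresentedGroup.of k


lemma arel_mk_one {m : ℕ} {w : FreeGroup ℕ} (h : w ∈ arels m) :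
    PresentedGroup.mk (arels m) w = 1 :=
  (QuotientGroup.eq_one_iff w).mpr (Subgroup.subset_normalClosure h)

lemma braid_rel (n i : ℕ) (h1 : 1 ≤ i) (h2 : i + 1 ≤ n) :
    sig (n+1) i * sig (n+1) (i+1) * sig (n+1) i
      = sig (n+1) (i+1) * sig (n+1) i * sig (n+1) (i+1) := by
  have h : (sg i * sg (i+1) * sg i * (sg (i+1) * sg i * sg (i+1))⁻¹) ∈ arels (n+1) := by
    left; right; exact ⟨i, h1, by omega, rfl⟩
  have := arel_mk_one h
  rw [map_mul, map_mul, map_inv, map_mul, map_mul, mul_inv_eq_one] at this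
  exact this

lemma comm_rel (n i j : ℕ) (h1 : 1 ≤ i) (h2 : i + 2 ≤ j) (h3 : j ≤ n) :
    sig (n+1) i * sig (n+1) j = sig (n+1) j * sig (n+1) i := by
  have h : (sg i * sg j * (sg j * sg i)⁻¹) ∈ arels (n+1) := by
    right; exact ⟨i, j, h1, h2, by omega, rfl⟩
  have := arel_mk_one h
  rw [map_mul, map_inv, map_mul, map_mul, mul_inv_eq_one] at this
  exact this

/-- `σ_{a+1} σ_{a+2} ⋯ σ_{a+c}` in `B_{n+1}`. -/
def seg (n a c : ℕ) : ArtinB (n+1) := ((List.range c).map fun k => sig (n+1) (a+1+k)).prod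

lemma seg_zero (n a : ℕ) : seg n a 0 = 1 := rfl

lemma seg_succ (n a c : ℕ) : seg n a (c+1) = seg n a c * sig (n+1) (a+1+c) := by
  simp [seg, List.range_succ]

lemma seg_add (n a c d : ℕ) : seg n a (c+d) = seg n a c * seg n (a+c) d := by
  induction d with
  | zero => simp [seg_zero]
  | succ d ih =>
      have e : a + 1 + (c + d) = a + c + 1 + d := by omega
      rw [← Nat.add_assoc, seg_succ, ih, seg_succ, e, mul_assoc]

lemma comm_seg_right (n i a c : ℕ) (h1 : 1 ≤ i) (h2 : i + 1 ≤ a) (h3 : a + c ≤ n) :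
    sig (n+1) i * seg n a c = seg n a c * sig (n+1) i := by
  induction c with
  | zero => simp [seg_zero]
  | succ c ih =>
      rw [seg_succ, ← mul_assoc, ih (by omega), mul_assoc, mul_assoc,
        comm_rel n i (a+1+c) h1 (by omega) (by omega)]

lemma comm_seg_left (n j a c : ℕ) (h2 : a + c + 2 ≤ j) (h3 : j ≤ n) :
    seg n a c * sig (n+1) j = sig (n+1) j * seg n a c := by
  induction c with
  | zero => simp [seg_zero]
  | succ c ih =>
      rw [seg_succ, mul_assoc, comm_rel n (a+1+c) j (by omega) (by omega) h3,
        ← mul_assoc, ih (by omega), mul_assoc]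

lemma delta_conj (n i : ℕ) (h1 : 1 ≤ i) (h2 : i + 1 ≤ n) :
    seg n 0 n * sig (n+1) i = sig (n+1) (i+1) * seg n 0 n := by
  obtain ⟨c, hc⟩ : ∃ c, n = (i+1) + c := ⟨n - (i+1), by omega⟩
  obtain ⟨a, ha⟩ : ∃ a, i = a + 1 := ⟨i - 1, by omega⟩
  have hb := braid_rel n i h1 h2
  have hl := comm_seg_left n (i+1) 0 a (by omega) (by omega)
  have key : seg n 0 (i+1) * sig (n+1) i = sig (n+1) (i+1) * seg n 0 (i+1) := by
    have hsplit : seg n 0 (i+1) = seg n 0 a * (sig (n+1) i * sig (n+1) (i+1)) := by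
      have e : (i+1) = a + 2 := by omega
      rw [e, seg_add n 0 a 2, Nat.zero_add]
      congr 1
      rw [show (2:ℕ) = 1 + 1 from rfl, seg_succ, seg_succ, seg_zero, one_mul]
      congr 2
      omega
    rw [hsplit, mul_assoc (seg n 0 a), hb, mul_assoc (sig (n+1) (i+1)),
      ← mul_assoc (seg n 0 a), hl, mul_assoc]
  have hsegn : seg n 0 n = seg n 0 (i+1) * seg n (i+1) c := by
    have h := seg_add n 0 (i+1) c
    rw [Nat.zero_add] at h
    rw [show (i+1) + c = n from hc.symm] at h
    exact h
  rw [hsegn, mul_assoc, ← comm_seg_right n i (i+1) c h1 (by omega) (by omega),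
    ← mul_assoc, key, mul_assoc]

lemma delta_pow_conj (n k : ℕ) (hk : k + 1 ≤ n) :
    seg n 0 n ^ k * sig (n+1) 1 = sig (n+1) (k+1) * seg n 0 n ^ k := by
  induction k with
  | zero => simp
  | succ k ih =>
      rw [pow_succ', mul_assoc, ih (by omega), ← mul_assoc,
        delta_conj n (k+1) (by omega) hk, mul_assoc, ← pow_succ']

lemma key_pow (n m : ℕ) (hm : m ≤ n) :
    (sig (n+1) 1 * seg n 0 n) ^ m = seg n 0 m * seg n 0 n ^ m := by
  induction m with
  | zero => simp [seg_zero]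
  | succ m ih =>
      rw [pow_succ, ih (by omega), mul_assoc, ← mul_assoc (seg n 0 n ^ m),
        delta_pow_conj n m hm, ← mul_assoc, ← mul_assoc, seg_succ,
        show 0 + 1 + m = m + 1 from by omega, mul_assoc, mul_assoc, ← pow_succ,
        ← mul_assoc]

lemma full_twist (n : ℕ) :
    (sig (n+1) 1 * seg n 0 n) ^ n = seg n 0 n ^ (n+1) := by
  rw [key_pow n n le_rfl, ← pow_succ']

lemma rel0_image (n : ℕ) (hn : 2 ≤ n) :
    (sig (n+1) 1 ^ 2 * sig (n+1) 2) ^ 2 = (sig (n+1) 2 * sig (n+1) 1 ^ 2) ^ 2 := by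
  have h := braid_rel n 1 le_rfl hn
  set x := sig (n+1) 1
  set y := sig (n+1) 2
  have L : (x ^ 2 * y) ^ 2 = (y*x*y)*(y*x*y) := by
    calc (x ^ 2 * y) ^ 2 = x*(x*y*x)*(x*y) := by simp only [pow_two, mul_assoc]
      _ = x*(y*x*y)*(x*y) := by rw [h]
      _ = (x*y*x)*(y*x*y) := by simp only [pow_two, mul_assoc]
      _ = (y*x*y)*(y*x*y) := by rw [h]
  have R : (y * x ^ 2) ^ 2 = (y*x*y)*(y*x*y) := by
    calc (y * x ^ 2) ^ 2 = y*x*(x*y*x)*x := by simp only [pow_two, mul_assoc]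
      _ = y*x*(y*x*y)*x := by rw [h]
      _ = (y*x*y)*(x*y*x) := by simp only [pow_two, mul_assoc]
      _ = (y*x*y)*(y*x*y) := by rw [h]
  rw [L, R]

lemma seg_eq_prod (n : ℕ) :
    ((List.range n).map fun k => sig (n+1) (k+1)).prod = seg n 0 n := by
  unfold seg
  congr 1
  exact List.map_congr_left fun k _ => by rw [show 0+1+k = k+1 from by omega]

/-- For `n ≥ 2`, the assignments `ρ_0 ↦ σ_1^2` and `ρ_j ↦ σ_{j+1}` (`1 ≤ j ≤ n-1`)
extend to a group homomorphism `B(r,n) → B_{n+1}`, and this homomorphism sends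
`ζ_n = (ρ_0 ρ_1 ⋯ ρ_{n-1})^n` to `Z_{n+1} = (σ_1 σ_2 ⋯ σ_n)^{n+1}`. -/
theorem monomial_to_artin_hom (n : ℕ) (hn : 2 ≤ n) :
    ∃ f : B n →* ArtinB (n + 1),
      f (rh n 0) = sig (n + 1) 1 ^ 2 ∧
      (∀ j, 1 ≤ j → j ≤ n - 1 → f (rh n j) = sig (n + 1) (j + 1)) ∧
      f (zeta n) = (((List.range n).map fun k => sig (n + 1) (k + 1)).prod) ^ (n + 1) := by
  classical
  set F : ℕ → ArtinB (n+1) := fun k =>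
    if k = 0 then sig (n+1) 1 ^ 2 else if k ≤ n - 1 then sig (n+1) (k+1) else 1 with hF
  have hF0 : F 0 = sig (n+1) 1 ^ 2 := by simp [hF]
  have hFj : ∀ j, 1 ≤ j → j ≤ n - 1 → F j = sig (n+1) (j+1) := by
    intro j h1 h2
    simp only [hF]
    rw [if_neg (by omega), if_pos h2]
  have hFbig : ∀ k, n ≤ k → F k = 1 := by
    intro k hk
    simp only [hF]
    rw [if_neg (by omega), if_neg (by omega)]
  have hrels : ∀ r ∈ brels n, FreeGroup.lift F r = 1 := by
    intro r hr
    rcases hr with ((⟨k, hk, rfl⟩ | ⟨-, rfl⟩) | ⟨i, h1, h2, rfl⟩) | ⟨i, j, hij, hjn, rfl⟩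
    · simp only [g, FreeGroup.lift_apply_of]
      exact hFbig k hk
    · simp only [g, map_mul, map_pow, map_inv, FreeGroup.lift_apply_of, mul_inv_eq_one]
      rw [hF0, hFj 1 le_rfl (by omega)]
      exact rel0_image n hn
    · simp only [g, map_mul, map_inv, FreeGroup.lift_apply_of, mul_inv_eq_one]
      rw [hFj i h1 (by omega), hFj (i+1) (by omega) h2]
      exact braid_rel n (i+1) (by omega) (by omega)
    · simp only [g, map_mul, map_inv, FreeGroup.lift_apply_of, mul_inv_eq_one]
      rcases Nat.eq_zero_or_pos i with rfl | hi
      · rw [hF0, hFj j (by omega) hjn]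
        exact ((show Commute (sig (n+1) 1) (sig (n+1) (j+1)) from
          comm_rel n 1 (j+1) le_rfl (by omega) (by omega)).pow_left 2).eq
      · rw [hFj i hi (by omega), hFj j (by omega) hjn]
        exact comm_rel n (i+1) (j+1) (by omega) (by omega) (by omega)
  refine ⟨PresentedGroup.toGroup hrels, ?_, ?_, ?_⟩
  · exact hF0 ▸ PresentedGroup.toGroup.of hrels
  · intro j h1 h2
    exact hFj j h1 h2 ▸ PresentedGroup.toGroup.of hrels
  · have hf : ∀ k, PresentedGroup.toGroup hrels (rh n k) = F k :=
      fun k => PresentedGroup.toGroup.of hrels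
    rw [zeta, map_pow, map_list_prod, List.map_map,
      show (⇑(PresentedGroup.toGroup hrels) ∘ rh n) = F from funext hf]
    have hprod : ((List.range n).map F).prod = sig (n+1) 1 * seg n 0 n := by
      obtain ⟨c, hc⟩ : ∃ c, n = 1 + c := ⟨n - 1, by omega⟩
      have h1 : (List.range n).map F
          = F 0 :: (List.range c).map (fun k => F (1 + k)) := by
        have hr : List.range n = List.range 1 ++ (List.range c).map (1 + ·) := by
          rw [hc, List.range_add]
        rw [hr, List.map_append, List.map_map]
        rfl
      have h2 : (List.range c).map (fun k => F (1 + k))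
          = (List.range c).map (fun k => sig (n+1) (1+1+k)) :=
        List.map_congr_left fun k hk => by
          rw [hFj (1+k) (by omega) (by
            have := List.mem_range.mp hk; omega)]
          congr 1
          omega
      have h3 : sig (n+1) 1 * seg n 1 c = seg n 0 n := by
        have h := seg_add n 0 1 c
        rw [Nat.zero_add, show 1 + c = n from hc.symm] at h
        rw [h, seg_succ, seg_zero, one_mul]
      rw [h1, List.prod_cons, h2, hF0]
      show sig (n+1) 1 ^ 2 * seg n 1 c = sig (n+1) 1 * seg n 0 n
      rw [pow_two, mul_assoc, h3]
    rw [hprod, full_twist, seg_eq_prod]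

end MonomialBraid
end
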